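/- arXiv:1001.0472 — 8 statements merged into one kernel-verified Lean document; each statement's English description precedes it below -/
import Mathlib

section
/- If I is an ideal of A, then I ⋈^f J := {(i, f(i)+j) | i ∈ I, j ∈ J} is an ideal of A ⋈^f J, and the quotient (A ⋈^f J)/(I ⋈^f J) is isomorphic to A/I. -/
variable {A B : Type*} [CommRing A] [CommRing B]

/-- The amalgamation `A ⋈^f J = {(a, f a + j) | a ∈ A, j ∈ J}` as a subring of `A × B`. -/
def amalg (f : A →+* B) (J : Ideal B) : Subring (A × B) where
  carrier := {p : A × B | ∃ a : A, ∃ j ∈ J, p = (a, f a + j)}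
  zero_mem' := ⟨0, 0, J.zero_mem, by simp [Prod.ext_iff]⟩
  one_mem' := ⟨1, 0, J.zero_mem, by simp [Prod.ext_iff]⟩
  add_mem' := by
    rintro _ _ ⟨a, j, hj, rfl⟩ ⟨a', j', hj', rfl⟩
    exact ⟨a + a', j + j', J.add_mem hj hj', by simp [Prod.ext_iff]; ring⟩
  neg_mem' := by
    rintro _ ⟨a, j, hj, rfl⟩
    exact ⟨-a, -j, J.neg_mem hj, by simp [Prod.ext_iff]; ring⟩
  mul_mem' := by
    rintro _ _ ⟨a, j, hj, rfl⟩ ⟨a', j', hj', rfl⟩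
    refine ⟨a * a', f a * j' + j * f a' + j * j', ?_, by simp [Prod.ext_iff]; ring⟩
    exact J.add_mem (J.add_mem (J.mul_mem_left _ hj') (J.mul_mem_right _ hj))
      (J.mul_mem_right _ hj)

/-- The subring `f(A) + J` of `B`. -/
def fAJ (f : A →+* B) (J : Ideal B) : Subring B where
  carrier := {b : B | ∃ a : A, ∃ j ∈ J, b = f a + j}
  zero_mem' := ⟨0, 0, J.zero_mem, by simp⟩
  one_mem' := ⟨1, 0, J.zero_mem, by simp⟩
  add_mem' := by
    rintro _ _ ⟨a, j, hj, rfl⟩ ⟨a', j', hj', rfl⟩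
    exact ⟨a + a', j + j', J.add_mem hj hj', by simp; ring⟩
  neg_mem' := by
    rintro _ ⟨a, j, hj, rfl⟩
    exact ⟨-a, -j, J.neg_mem hj, by simp; ring⟩
  mul_mem' := by
    rintro _ _ ⟨a, j, hj, rfl⟩ ⟨a', j', hj', rfl⟩
    refine ⟨a * a', f a * j' + j * f a' + j * j', ?_, by simp; ring⟩
    exact J.add_mem (J.add_mem (J.mul_mem_left _ hj') (J.mul_mem_right _ hj))
      (J.mul_mem_right _ hj)

/-! `I ⋈^f J` is the preimage of `I` under the first projection `A ⋈^f J → A`, which is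
surjective since `(a, f a) ∈ A ⋈^f J`; so the quotient by it is `A ⧸ I`. -/

noncomputable def Ideal.quotientComapEquivOfSurjective {R S : Type*} [Ring R] [Ring S]
    {g : R →+* S} (hg : Function.Surjective g) (I : Ideal S) [I.IsTwoSided] :
    R ⧸ I.comap g ≃+* S ⧸ I :=
  RingEquiv.ofBijective (Ideal.quotientMap I g le_rfl)
    ⟨Ideal.quotientMap_injective, Ideal.quotientMap_surjective hg⟩

section AmalgFst

variable (f : A →+* B) (J : Ideal B)

def amalgFst : amalg f J →+* A :=
  (RingHom.fst A B).comp (amalg f J).subtype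

theorem amalgFst_surjective : Function.Surjective (amalgFst f J) :=
  fun a ↦ ⟨⟨(a, f a), a, 0, J.zero_mem, by simp⟩, rfl⟩

theorem mem_comap_amalgFst_iff {I : Ideal A} {x : amalg f J} :
    x ∈ I.comap (amalgFst f J) ↔ ∃ i ∈ I, ∃ j ∈ J, (x : A × B) = (i, f i + j) := by
  obtain ⟨a, j, hj, hx⟩ := x.2
  simp only [Ideal.mem_comap, amalgFst, RingHom.comp_apply, Subring.coe_subtype,
    RingHom.coe_fst, hx, Prod.mk.injEq]
  constructor
  · exact fun ha ↦ ⟨a, ha, j, hj, rfl, rfl⟩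
  · rintro ⟨i, hi, -, -, rfl, -⟩
    exact hi

end AmalgFst

/-- If `I` is an ideal of `A`, then `I ⋈^f J := {(i, f i + j) | i ∈ I, j ∈ J}` is an ideal of
`A ⋈^f J`, and `(A ⋈^f J)/(I ⋈^f J) ≃ A/I`. -/
theorem amalg_ideal_quotient (f : A →+* B) (J : Ideal B) (I : Ideal A) :
    ∃ K : Ideal (amalg f J),
      (K : Set (amalg f J)) =
        {x : amalg f J | ∃ i ∈ I, ∃ j ∈ J, (x : A × B) = (i, f i + j)} ∧
      Nonempty ((amalg f J ⧸ K) ≃+* A ⧸ I) :=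
  ⟨I.comap (amalgFst f J), Set.ext fun _ ↦ mem_comap_amalgFst_iff f J,
    ⟨Ideal.quotientComapEquivOfSurjective (amalgFst_surjective f J) I⟩⟩
end

section
/- The map γ : A ⋈^f J → (f(A)+J)/J sending (a, f(a)+j) to the class of f(a) is a surjective ring homomorphism with kernel f⁻¹(J) × J; hence (A ⋈^f J)/(f⁻¹(J) × J) is isomorphic to (f(A)+J)/J. -/
variable {A B : Type*} [CommRing A] [CommRing B]

/-! `γ` factors as `A ⋈^f J → A → f(A) + J → (f(A) + J)/J`. Both steps are onto: `(a, f a)` lies in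
`A ⋈^f J`, and `f a + j ≡ f a` modulo `J`. For `(a, f a + j)` in `A ⋈^f J` one has `f a ∈ J` iff
`f a + j ∈ J`, which identifies the kernel. -/

section

variable (f : A →+* B) (J : Ideal B)

def fAJ.ofBase : A →+* fAJ f J :=
  f.codRestrict (fAJ f J) fun a => ⟨a, 0, J.zero_mem, (add_zero _).symm⟩

theorem fAJ.mk_ofBase_surjective :
    Function.Surjective
      ((Ideal.Quotient.mk (J.comap (fAJ f J).subtype)).comp (fAJ.ofBase f J)) := by
  intro q
  obtain ⟨⟨b, a, j, hj, rfl⟩, rfl⟩ := Ideal.Quotient.mk_surjective q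
  refine ⟨a, Ideal.Quotient.mk_eq_mk_iff_sub_mem _ _ |>.mpr ?_⟩
  change f a - (f a + j) ∈ J
  simpa using J.neg_mem hj

theorem amalg.fst_surjective : Function.Surjective fun x : amalg f J => (x : A × B).1 :=
  fun a => ⟨⟨(a, f a), a, 0, J.zero_mem, by rw [add_zero]⟩, rfl⟩

variable {f J} in
theorem amalg.map_fst_mem_iff_snd_mem {p : A × B} (hp : p ∈ amalg f J) :
    f p.1 ∈ J ↔ p.2 ∈ J := by
  obtain ⟨a, j, hj, rfl⟩ := hp
  exact (J.add_mem_iff_left hj).symm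

def amalg.gamma : amalg f J →+* (fAJ f J) ⧸ (J.comap (fAJ f J).subtype) :=
  (Ideal.Quotient.mk _).comp
    ((fAJ.ofBase f J).comp ((RingHom.fst A B).comp (amalg f J).subtype))

theorem amalg.gamma_surjective : Function.Surjective (amalg.gamma f J) :=
  (fAJ.mk_ofBase_surjective f J).comp (amalg.fst_surjective f J)

theorem amalg.ker_gamma :
    (RingHom.ker (amalg.gamma f J) : Set (amalg f J)) =
      {x : amalg f J | ∃ a : A, ∃ j ∈ J, f a ∈ J ∧ (x : A × B) = (a, j)} := by
  ext ⟨⟨a, b⟩, hx⟩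
  rw [SetLike.mem_coe, RingHom.mem_ker, amalg.gamma, RingHom.comp_apply,
    Ideal.Quotient.eq_zero_iff_mem]
  change f a ∈ J ↔ _
  rw [amalg.map_fst_mem_iff_snd_mem hx]
  constructor
  · intro hb
    exact ⟨a, b, hb, (amalg.map_fst_mem_iff_snd_mem hx).2 hb, rfl⟩
  · rintro ⟨a', j, hj, -, hx'⟩
    rwa [(Prod.mk.inj hx').2]

end

/-- `γ : A ⋈^f J → (f(A)+J)/J`, `(a, f a + j) ↦ f a + J`, is a surjective ring homomorphism with
kernel `f⁻¹(J) × J`; hence `(A ⋈^f J)/(f⁻¹(J) × J) ≃ (f(A)+J)/J`. -/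
theorem amalg_gamma (f : A →+* B) (J : Ideal B) :
    ∃ γ : amalg f J →+* (fAJ f J) ⧸ (J.comap (fAJ f J).subtype),
      (∀ x : amalg f J,
        γ x = Ideal.Quotient.mk (J.comap (fAJ f J).subtype)
          ⟨f (x : A × B).1, (x : A × B).1, 0, J.zero_mem, by ring⟩) ∧
      Function.Surjective γ ∧
      (RingHom.ker γ : Set (amalg f J)) =
        {x : amalg f J | ∃ a : A, ∃ j ∈ J, f a ∈ J ∧ (x : A × B) = (a, j)} ∧
      Nonempty ((amalg f J ⧸ RingHom.ker γ) ≃+* (fAJ f J) ⧸ (J.comap (fAJ f J).subtype)) :=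
  ⟨amalg.gamma f J, fun _ => rfl, amalg.gamma_surjective f J, amalg.ker_gamma f J,
    ⟨RingHom.quotientKerEquivOfSurjective (amalg.gamma_surjective f J)⟩⟩
end

section
/- If f is surjective, then (A ⋈^f J)/(f⁻¹(J) × J) is isomorphic to B/J. -/
/-! The map `(a, f a + j) ↦ f a + j mod J` is a ring map `A ⋈^f J → B/J`; it is onto as soon as
`A → B/J` is, and `(a, f a + j)` lies in its kernel iff `f a + j ∈ J`, i.e. iff `f a ∈ J`. So the
kernel is `f⁻¹(J) × J` and the first isomorphism theorem applies. -/

variable {A B : Type*} [CommRing A] [CommRing B]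

def amalgToQuotient (f : A →+* B) (J : Ideal B) : amalg f J →+* B ⧸ J :=
  (Ideal.Quotient.mk J).comp ((RingHom.snd A B).comp (amalg f J).subtype)

theorem amalg_snd_mem_iff {f : A →+* B} {J : Ideal B} {p : A × B} (hp : p ∈ amalg f J) :
    p.2 ∈ J ↔ f p.1 ∈ J := by
  obtain ⟨a, j, hj, rfl⟩ := hp
  exact J.add_mem_iff_left hj

theorem amalgToQuotient_surjective {f : A →+* B} {J : Ideal B}
    (hf : Function.Surjective ((Ideal.Quotient.mk J).comp f)) :
    Function.Surjective (amalgToQuotient f J) := by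
  intro b
  obtain ⟨a, rfl⟩ := hf b
  exact ⟨⟨(a, f a + 0), a, 0, J.zero_mem, rfl⟩, by simp [amalgToQuotient]⟩

theorem coe_ker_amalgToQuotient (f : A →+* B) (J : Ideal B) :
    (RingHom.ker (amalgToQuotient f J) : Set (amalg f J)) =
      {x : amalg f J | ∃ a : A, ∃ j ∈ J, f a ∈ J ∧ (x : A × B) = (a, j)} := by
  ext ⟨⟨a, b⟩, hx⟩
  have hker : (⟨(a, b), hx⟩ : amalg f J) ∈ RingHom.ker (amalgToQuotient f J) ↔ b ∈ J := by
    simp [amalgToQuotient, Ideal.Quotient.eq_zero_iff_mem]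
  simp only [SetLike.mem_coe, hker, Set.mem_ofPred_eq, Prod.mk.injEq]
  constructor
  · intro hb
    exact ⟨a, b, hb, (amalg_snd_mem_iff hx).1 hb, rfl, rfl⟩
  · rintro ⟨_, _, hb, -, rfl, rfl⟩
    exact hb

/-- If `f` is surjective, then `(A ⋈^f J)/(f⁻¹(J) × J) ≃ B/J`. -/
theorem amalg_quotient_of_surjective (f : A →+* B) (J : Ideal B)
    (hf : Function.Surjective f) (K : Ideal (amalg f J))
    (hK : (K : Set (amalg f J)) =
      {x : amalg f J | ∃ a : A, ∃ j ∈ J, f a ∈ J ∧ (x : A × B) = (a, j)}) :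
    Nonempty ((amalg f J ⧸ K) ≃+* B ⧸ J) := by
  have hker : RingHom.ker (amalgToQuotient f J) = K :=
    SetLike.coe_injective ((coe_ker_amalgToQuotient f J).trans hK.symm)
  have hsurj : Function.Surjective (amalgToQuotient f J) :=
    amalgToQuotient_surjective (Ideal.Quotient.mk_surjective.comp hf)
  exact ⟨(Ideal.quotEquivOfEq hker.symm).trans (RingHom.quotientKerEquivOfSurjective hsurj)⟩
end

section
/- For a prime ideal Q of B not containing J, the ideal Q̄^f := {(a, f(a)+j) | a ∈ A, j ∈ J, f(a)+j ∈ Q} is a maximal ideal of A ⋈^f J if and only if Q is a maximal ideal of B. -/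
variable {A B : Type*} [CommRing A] [CommRing B]

/-!
`Q̄^f` is the preimage of `Q` under the second projection `A ⋈^f J → B`, whose image contains `J`,
so it suffices that `φ⁻¹(Q)` is maximal iff `Q` is, for any ring map `φ` whose image contains an
ideal `J ⊄ Q`. Fix `j₀ ∈ J \ Q`. If `φ⁻¹(Q)` is maximal and `b ∉ Q`, then `b j₀ ∉ Q` lies in the
image and is invertible modulo `Q` by an element of the image, hence so is `b`. If `Q` is maximal,
an inverse `u` of `x` modulo `Q` may be replaced by `u v j₀ ∈ J ⊆ im φ`, where `v j₀ ≡ 1`.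
-/

namespace Ideal

variable {R S : Type*} [CommRing R] [CommRing S]

theorem isMaximal_iff_exists_mul_sub_one_mem {I : Ideal R} :
    I.IsMaximal ↔ (1 : R) ∉ I ∧ ∀ x ∉ I, ∃ y, y * x - 1 ∈ I := by
  refine ⟨fun hI => ⟨(ne_top_iff_one I).mp hI.ne_top, fun x hx => ?_⟩, fun ⟨h1, hinv⟩ => ?_⟩
  · obtain ⟨y, i, hi, hyx⟩ := hI.exists_inv hx
    exact ⟨y, by rw [← hyx]; simpa using I.neg_mem hi⟩
  · refine isMaximal_iff.mpr ⟨h1, fun L x hIL hxI hxL => ?_⟩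
    obtain ⟨y, hy⟩ := hinv x hxI
    simpa using L.sub_mem (L.mul_mem_left y hxL) (hIL hy)

theorem IsMaximal.exists_mem_mul_sub_one_mem {Q J : Ideal S} (hQ : Q.IsMaximal) (hJQ : ¬J ≤ Q)
    {x : S} (hx : x ∉ Q) : ∃ w ∈ J, w * x - 1 ∈ Q := by
  obtain ⟨j₀, hj₀J, hj₀Q⟩ := Set.not_subset.mp hJQ
  obtain ⟨u, hu⟩ := (isMaximal_iff_exists_mul_sub_one_mem.mp hQ).2 x hx
  obtain ⟨v, hv⟩ := (isMaximal_iff_exists_mul_sub_one_mem.mp hQ).2 j₀ hj₀Q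
  refine ⟨u * v * j₀, J.mul_mem_left _ hj₀J, ?_⟩
  have hexpand : u * v * j₀ * x - 1 = v * j₀ * (u * x - 1) + (v * j₀ - 1) := by ring
  rw [hexpand]
  exact Q.add_mem (Q.mul_mem_left _ hu) hv

theorem comap_isMaximal_iff_of_subset_range (φ : R →+* S) {Q J : Ideal S} (hQ : Q.IsPrime)
    (hJ : (J : Set S) ⊆ Set.range φ) (hJQ : ¬J ≤ Q) :
    (Q.comap φ).IsMaximal ↔ Q.IsMaximal := by
  refine ⟨fun h => ?_, fun hQmax => ?_⟩
  · simp only [isMaximal_iff_exists_mul_sub_one_mem, mem_comap, map_sub, map_mul, map_one] at h ⊢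
    refine ⟨h.1, fun b hb => ?_⟩
    obtain ⟨j₀, hj₀J, hj₀Q⟩ := Set.not_subset.mp hJQ
    obtain ⟨r, hr⟩ := hJ (J.mul_mem_left b hj₀J)
    obtain ⟨s, hs⟩ := h.2 r (by rw [hr]; exact hQ.mul_notMem hb hj₀Q)
    exact ⟨φ s * j₀, by rwa [hr, mul_comm b, ← mul_assoc] at hs⟩
  · simp only [isMaximal_iff_exists_mul_sub_one_mem, mem_comap, map_sub, map_mul, map_one]
    refine ⟨(isMaximal_iff_exists_mul_sub_one_mem.mp hQmax).1, fun x hx => ?_⟩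
    obtain ⟨w, hwJ, hw⟩ := hQmax.exists_mem_mul_sub_one_mem hJQ hx
    obtain ⟨s, rfl⟩ := hJ hwJ
    exact ⟨s, hw⟩

end Ideal

def amalgSnd (f : A →+* B) (J : Ideal B) : amalg f J →+* B :=
  (RingHom.snd A B).comp (amalg f J).subtype

theorem subset_range_amalgSnd (f : A →+* B) (J : Ideal B) :
    (J : Set B) ⊆ Set.range (amalgSnd f J) :=
  fun j hj => ⟨⟨(0, j), 0, j, hj, by simp⟩, rfl⟩

theorem eq_comap_amalgSnd (f : A →+* B) (J Q : Ideal B) (K : Ideal (amalg f J))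
    (hK : (K : Set (amalg f J)) =
      {x : amalg f J | ∃ a : A, ∃ j ∈ J, f a + j ∈ Q ∧ (x : A × B) = (a, f a + j)}) :
    K = Q.comap (amalgSnd f J) := by
  ext x
  rw [← SetLike.mem_coe, hK, Ideal.mem_comap]
  obtain ⟨a, j, hj, hx⟩ := x.2
  simp only [Set.mem_ofPred_eq, amalgSnd, RingHom.comp_apply, Subring.coe_subtype,
    RingHom.coe_snd, hx]
  exact ⟨fun ⟨_, _, _, hQ, he⟩ => by rwa [(Prod.mk.inj he).2], fun hQ => ⟨a, j, hj, hQ, rfl⟩⟩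

/-- For a prime ideal `Q` of `B` not containing `J`, the ideal `Q̄^f` is maximal in `A ⋈^f J`
iff `Q` is maximal in `B`. -/
theorem amalg_maximal_iff_B (f : A →+* B) (J : Ideal B) (Q : Ideal B) (hQ : Q.IsPrime)
    (hJQ : ¬ J ≤ Q) (K : Ideal (amalg f J))
    (hK : (K : Set (amalg f J)) =
      {x : amalg f J | ∃ a : A, ∃ j ∈ J, f a + j ∈ Q ∧ (x : A × B) = (a, f a + j)}) :
    K.IsMaximal ↔ Q.IsMaximal := by
  rw [eq_comap_amalgSnd f J Q K hK]
  exact Ideal.comap_isMaximal_iff_of_subset_range _ hQ (subset_range_amalgSnd f J) hJQ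
end

section
/- Every element of the subring A × (f(A)+J) of A × B is integral of degree at most two over A ⋈^f J; in particular A × (f(A)+J) is integral over A ⋈^f J. -/
variable {A B : Type*} [CommRing A] [CommRing B]

/-
An element `(α, f a + j)` of `A × (f(A)+J)` agrees with `(α, f α) ∈ A ⋈^f J` in the first
coordinate and with `(a, f a + j) ∈ A ⋈^f J` in the second, so the product of its differences with
these two elements vanishes: it is a root of the monic quadratic `(X - (α, f α)) (X - (a, f a + j))`.
-/

open Polynomial

theorem exists_monic_natDegree_le_two_eval₂_eq_zero {S R : Type*} [CommRing S] [CommRing R]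
    (φ : S →+* R) {x : R} (u v : S) (h : (x - φ u) * (x - φ v) = 0) :
    ∃ p : S[X], p.Monic ∧ p.natDegree ≤ 2 ∧ p.eval₂ φ x = 0 :=
  ⟨(X - C u) * (X - C v), (monic_X_sub_C u).mul (monic_X_sub_C v),
    natDegree_mul_le.trans (add_le_add (natDegree_X_sub_C_le u) (natDegree_X_sub_C_le v)),
    by simpa [eval₂_mul] using h⟩

theorem mk_mem_amalg (f : A →+* B) {J : Ideal B} (a : A) {j : B} (hj : j ∈ J) :
    (a, f a + j) ∈ amalg f J :=
  ⟨a, j, hj, rfl⟩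

/-- Every element of the subring `A × (f(A)+J)` of `A × B` is integral of degree at most two over
`A ⋈^f J`; in particular `A × (f(A)+J)` is integral over `A ⋈^f J`. -/
theorem amalg_integral_deg_two (f : A →+* B) (J : Ideal B) :
    (∀ x ∈ (⊤ : Subring A).prod (fAJ f J),
      ∃ p : Polynomial (amalg f J), p.Monic ∧ p.natDegree ≤ 2 ∧
        Polynomial.eval₂ (amalg f J).subtype x p = 0) ∧
    ∀ x ∈ (⊤ : Subring A).prod (fAJ f J), ((amalg f J).subtype).IsIntegralElem x := by
  have quadratic : ∀ x ∈ (⊤ : Subring A).prod (fAJ f J),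
      ∃ p : Polynomial (amalg f J), p.Monic ∧ p.natDegree ≤ 2 ∧
        Polynomial.eval₂ (amalg f J).subtype x p = 0 := by
    rintro ⟨α, _⟩ ⟨-, a, j, hj, rfl⟩
    refine exists_monic_natDegree_le_two_eval₂_eq_zero (amalg f J).subtype
      ⟨(α, f α + 0), mk_mem_amalg f α J.zero_mem⟩ ⟨(a, f a + j), mk_mem_amalg f a hj⟩ ?_
    ext <;> simp
  exact ⟨quadratic, fun x hx => (quadratic x hx).imp fun _ hp => ⟨hp.1, hp.2.2⟩⟩
end

section
/- The Krull dimension of A ⋈^f J equals max{dim A, dim(f(A)+J)}. In particular, if f is surjective then dim(A ⋈^f J) = dim A. -/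
/-!
A prime of `A ⋈^f J` contains the kernel of one of the two projections `A ⋈^f J → A` and
`A ⋈^f J → f(A) + J`, because the product of these kernels is zero. A chain of primes therefore
lies entirely above one kernel and descends to a chain of the same length in `A` or in
`f(A) + J`; conversely both rings are quotients of `A ⋈^f J`.
-/

variable {A B : Type*} [CommRing A] [CommRing B]

namespace Order

variable {α : Type*} [Preorder α]

lemma LTSeries.length_le_krullDim_of_forall_mem {s : Set α} (p : LTSeries α)
    (hp : ∀ i, p i ∈ s) : p.length ≤ krullDim s :=
  LTSeries.length_le_krullDim <|
    LTSeries.mk (α := s) p.length (fun i ↦ ⟨p i, hp i⟩) fun _ _ h ↦ p.strictMono h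

lemma krullDim_eq_max_of_isUpperSet {s t : Set α} (hs : IsUpperSet s) (ht : IsUpperSet t)
    (hst : s ∪ t = Set.univ) : krullDim α = max (krullDim s) (krullDim t) := by
  refine le_antisymm (iSup_le fun p ↦ ?_) (max_le ?_ ?_)
  · have hhead : p.head ∈ s ∪ t := hst ▸ Set.mem_univ _
    rcases hhead with hp | hp
    · exact le_max_of_le_left <|
        LTSeries.length_le_krullDim_of_forall_mem p fun i ↦ hs (p.head_le i) hp
    · exact le_max_of_le_right <|
        LTSeries.length_le_krullDim_of_forall_mem p fun i ↦ ht (p.head_le i) hp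
  · exact krullDim_le_of_strictMono _ (Subtype.strictMono_coe _)
  · exact krullDim_le_of_strictMono _ (Subtype.strictMono_coe _)

end Order

section KrullDim

variable {R S T : Type*} [CommRing R] [CommRing S] [CommRing T]

lemma ringKrullDim_eq_max_quotient_of_mul_le_nilradical {I K : Ideal R}
    (hIK : I * K ≤ nilradical R) :
    ringKrullDim R = max (ringKrullDim (R ⧸ I)) (ringKrullDim (R ⧸ K)) := by
  have isUpperSet_zeroLocus (L : Ideal R) : IsUpperSet (PrimeSpectrum.zeroLocus (L : Set R)) :=
    fun _ _ hxy hx ↦ Set.Subset.trans hx hxy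
  rw [ringKrullDim_quotient, ringKrullDim_quotient]
  refine Order.krullDim_eq_max_of_isUpperSet (isUpperSet_zeroLocus I) (isUpperSet_zeroLocus K) ?_
  rwa [← PrimeSpectrum.zeroLocus_mul, PrimeSpectrum.zeroLocus_eq_univ_iff]

lemma ringKrullDim_eq_max_of_ker_mul_ker_le_nilradical (g : R →+* S) (h : R →+* T)
    (hg : Function.Surjective g) (hh : Function.Surjective h)
    (hker : RingHom.ker g * RingHom.ker h ≤ nilradical R) :
    ringKrullDim R = max (ringKrullDim S) (ringKrullDim T) := by
  rw [ringKrullDim_eq_max_quotient_of_mul_le_nilradical hker,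
    ringKrullDim_eq_of_ringEquiv (RingHom.quotientKerEquivOfSurjective hg),
    ringKrullDim_eq_of_ringEquiv (RingHom.quotientKerEquivOfSurjective hh)]

end KrullDim

namespace amalg

variable (f : A →+* B) (J : Ideal B)

def fst : amalg f J →+* A :=
  (RingHom.fst A B).comp (amalg f J).subtype

def snd : amalg f J →+* fAJ f J :=
  ((RingHom.snd A B).comp (amalg f J).subtype).codRestrict (fAJ f J) fun x ↦ by
    obtain ⟨a, j, hj, hx⟩ := x.2
    exact ⟨a, j, hj, by simp [hx]⟩

lemma fst_surjective_s17 : Function.Surjective (fst f J) := fun a ↦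
  ⟨⟨(a, f a), a, 0, J.zero_mem, by simp⟩, rfl⟩

lemma snd_surjective : Function.Surjective (snd f J) := by
  rintro ⟨_, a, j, hj, rfl⟩
  exact ⟨⟨(a, f a + j), a, j, hj, rfl⟩, rfl⟩

lemma ker_fst_mul_ker_snd : RingHom.ker (fst f J) * RingHom.ker (snd f J) = ⊥ := by
  refine eq_bot_iff.2 <| Ideal.mul_le.2 fun x hx y hy ↦ ?_
  have hx1 : x.1.1 = 0 := hx
  have hy2 : y.1.2 = 0 := congrArg Subtype.val hy
  exact Ideal.mem_bot.2 <| Subtype.ext <| Prod.ext (by simp [hx1]) (by simp [hy2])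

end amalg

lemma ringKrullDim_fAJ_le_of_surjective {f : A →+* B} (hf : Function.Surjective f)
    (J : Ideal B) : ringKrullDim (fAJ f J) ≤ ringKrullDim A := by
  refine ringKrullDim_le_of_surjective
    (f.codRestrict (fAJ f J) fun a ↦ ⟨a, 0, J.zero_mem, by simp⟩) ?_
  rintro ⟨b, -⟩
  obtain ⟨a, rfl⟩ := hf b
  exact ⟨a, rfl⟩

/-- `dim (A ⋈^f J) = max (dim A) (dim (f(A)+J))`; in particular, if `f` is surjective then
`dim (A ⋈^f J) = dim A`. -/
theorem amalg_krullDim (f : A →+* B) (J : Ideal B) :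
    ringKrullDim (amalg f J) = max (ringKrullDim A) (ringKrullDim (fAJ f J)) ∧
    (Function.Surjective f → ringKrullDim (amalg f J) = ringKrullDim A) := by
  have hmax : ringKrullDim (amalg f J) = max (ringKrullDim A) (ringKrullDim (fAJ f J)) :=
    ringKrullDim_eq_max_of_ker_mul_ker_le_nilradical _ _ (amalg.fst_surjective_s17 f J)
      (amalg.snd_surjective f J) ((amalg.ker_fst_mul_ker_snd f J).le.trans bot_le)
  exact ⟨hmax, fun hf ↦ hmax.trans (max_eq_left (ringKrullDim_fAJ_le_of_surjective hf J))⟩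
end

section
/- If the induced homomorphism f_⋄ : A → f(A)+J is integral, then dim(A ⋈^f J) = dim A. -/
variable {A B : Type*} [CommRing A] [CommRing B]

/-! The diagonal `a ↦ (a, f a)` makes `A ⋈^f J` an integral extension of `A`: an element
`(a, f a + j)` is integral componentwise, `a` trivially and `f a + j ∈ f(A) + J` by hypothesis.
By incomparability, contracting a strict chain of primes of `A ⋈^f J` gives a strict chain of
primes of `A`, so `dim (A ⋈^f J) ≤ dim A`; the reverse inequality holds because the first
projection maps `A ⋈^f J` onto `A`. -/

theorem ringKrullDim_le_of_isIntegral {R S : Type*} [CommRing R] [CommRing S] (f : R →+* S)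
    (hf : f.IsIntegral) : ringKrullDim S ≤ ringKrullDim R := by
  let : Algebra R S := f.toAlgebra
  have : Algebra.IsIntegral R S := ⟨hf⟩
  refine Order.krullDim_le_of_strictMono (PrimeSpectrum.comap f) fun P Q hPQ ↦ ?_
  exact Ideal.IsIntegral.comap_lt_comap (R := R) hPQ

section Amalgamation

variable (f : A →+* B) (J : Ideal B)

def amalgInclusion : A →+* amalg f J :=
  ((RingHom.id A).prod f).codRestrict (amalg f J) fun a ↦ ⟨a, 0, J.zero_mem, by simp⟩

theorem amalgInclusion_isIntegral (hint : ∀ b ∈ fAJ f J, f.IsIntegralElem b) :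
    (amalgInclusion f J).IsIntegral := by
  let : Algebra A B := f.toAlgebra
  let : Algebra A (amalg f J) := (amalgInclusion f J).toAlgebra
  let val : amalg f J →ₐ[A] A × B := { (amalg f J).subtype with commutes' := fun _ ↦ rfl }
  rintro ⟨_, a, j, hj, rfl⟩
  refine (isIntegral_algHom_iff val Subtype.val_injective).mp ?_
  exact IsIntegral.pair (Algebra.IsIntegral.isIntegral a) (hint _ ⟨a, j, hj, rfl⟩)

end Amalgamation

/-- If the induced homomorphism `f_⋄ : A → f(A)+J` is integral, then
`dim (A ⋈^f J) = dim A`. -/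
theorem amalg_krullDim_of_integral (f : A →+* B) (J : Ideal B)
    (hint : ∀ b ∈ fAJ f J, f.IsIntegralElem b) :
    ringKrullDim (amalg f J) = ringKrullDim A :=
  le_antisymm (ringKrullDim_le_of_isIntegral _ (amalgInclusion_isIntegral f J hint))
    (ringKrullDim_le_of_surjective _ (amalgFst_surjective f J))
end

section
/- For a prime ideal Q of B, one has f⁻¹(Q+J) = {0} if and only if the prime Q̄^f := (A × Q) ∩ (A ⋈^f J) is contained in J₀ := {0} × J. Moreover, if f⁻¹(Q+J) = {0} and Q does not contain J, then Q̄^f is contained in P ⋈^f J for every prime ideal P of A. -/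
variable {A B : Type*} [CommRing A] [CommRing B]

/-! The first coordinates of `Q̄^f` are exactly `f⁻¹(Q + J)`, because `(a, b) ∈ A ⋈^f J` means
`b - f a ∈ J`; and an element of `A ⋈^f J` with first coordinate `0` lies in `J₀`. The second claim
holds because `J₀ ⊆ P ⋈^f J` for every ideal `P`. -/

namespace amalg

variable (f : A →+* B) (J : Ideal B)

theorem mem_iff {x : A × B} : x ∈ amalg f J ↔ x.2 - f x.1 ∈ J := by
  constructor
  · rintro ⟨a, j, hj, rfl⟩
    simpa using hj
  · intro h
    exact ⟨x.1, x.2 - f x.1, h, by simp⟩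

theorem exists_snd_mem_iff_mem_add (I : Ideal B) (a : A) :
    (∃ b ∈ I, (a, b) ∈ amalg f J) ↔ f a ∈ I + J := by
  simp only [mem_iff, Submodule.add_eq_sup, Submodule.mem_sup]
  constructor
  · rintro ⟨b, hb, hj⟩
    exact ⟨b, hb, -(b - f a), J.neg_mem hj, by ring⟩
  · rintro ⟨b, hb, j, hj, hbj⟩
    refine ⟨b, hb, ?_⟩
    simpa [← hbj] using J.neg_mem hj

theorem preimage_add_eq_zero_iff (I : Ideal B) :
    f ⁻¹' ((I + J : Ideal B) : Set B) = {0} ↔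
      (Set.univ ×ˢ (I : Set B)) ∩ (amalg f J : Set (A × B)) ⊆ ({0} : Set A) ×ˢ (J : Set B) := by
  have h0 : (0 : A) ∈ f ⁻¹' ((I + J : Ideal B) : Set B) := by simp
  rw [Set.eq_singleton_iff_unique_mem]
  simp only [h0, true_and, Set.mem_preimage, SetLike.mem_coe, ← exists_snd_mem_iff_mem_add]
  constructor
  · rintro h ⟨a, b⟩ ⟨⟨-, hb⟩, hab⟩
    obtain rfl : a = 0 := h a ⟨b, hb, hab⟩
    refine ⟨rfl, ?_⟩
    simpa [mem_iff] using hab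
  · rintro h a ⟨b, hb, hab⟩
    exact (h ⟨⟨trivial, hb⟩, hab⟩).1

theorem zero_prod_subset (P : Ideal A) :
    ({0} : Set A) ×ˢ (J : Set B) ⊆ {x : A × B | ∃ p ∈ P, ∃ j ∈ J, x = (p, f p + j)} := by
  rintro ⟨a, b⟩ ⟨rfl, hb⟩
  exact ⟨0, P.zero_mem, b, hb, by simp⟩

end amalg

theorem amalg_Qbar_sub_J0_general (f : A →+* B) (J : Ideal B) (Q : Ideal B) :
    ((f ⁻¹' ((Q + J : Ideal B) : Set B) = {0}) ↔
      ((Set.univ ×ˢ (Q : Set B)) ∩ (amalg f J : Set (A × B)) ⊆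
        ({0} : Set A) ×ˢ (J : Set B))) ∧
    (f ⁻¹' ((Q + J : Ideal B) : Set B) = {0} → ¬ J ≤ Q →
      ∀ P : Ideal A, P.IsPrime →
        (Set.univ ×ˢ (Q : Set B)) ∩ (amalg f J : Set (A × B)) ⊆
          {x : A × B | ∃ p ∈ P, ∃ j ∈ J, x = (p, f p + j)}) :=
  ⟨amalg.preimage_add_eq_zero_iff f J Q, fun h _ P _ =>
    ((amalg.preimage_add_eq_zero_iff f J Q).mp h).trans (amalg.zero_prod_subset f J P)⟩

/-- For a prime ideal `Q` of `B`: `f⁻¹(Q+J) = {0}` iff `Q̄^f = (A × Q) ∩ (A ⋈^f J) ⊆ J₀ = {0} × J`.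
Moreover, if `f⁻¹(Q+J) = {0}` and `Q` does not contain `J`, then `Q̄^f ⊆ P ⋈^f J` for every prime
ideal `P` of `A`. -/
theorem amalg_Qbar_sub_J0 (f : A →+* B) (J : Ideal B) (Q : Ideal B) (hQ : Q.IsPrime) :
    ((f ⁻¹' ((Q + J : Ideal B) : Set B) = {0}) ↔
      ((Set.univ ×ˢ (Q : Set B)) ∩ (amalg f J : Set (A × B)) ⊆
        ({0} : Set A) ×ˢ (J : Set B))) ∧
    (f ⁻¹' ((Q + J : Ideal B) : Set B) = {0} → ¬ J ≤ Q →
      ∀ P : Ideal A, P.IsPrime →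
        (Set.univ ×ˢ (Q : Set B)) ∩ (amalg f J : Set (A × B)) ⊆
          {x : A × B | ∃ p ∈ P, ∃ j ∈ J, x = (p, f p + j)}) :=
  amalg_Qbar_sub_J0_general f J Q
end
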